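/- Let A be a Hurwitz real n×n matrix and let Q be any real n×n matrix. Then the integral W := ∫₀^∞ exp(tA) Q exp(tAᵀ) dt converges, and W is the unique solution of the Lyapunov equation A W + W Aᵀ + Q = 0. -/

import Mathlib

/-!
For a Hurwitz matrix `A`, every eigenvalue `μ` of `exp A` satisfies `‖μ‖ < 1`: the eigenspace of
`exp A` for `μ` is invariant under the commuting matrix `A`, so it contains an eigenvector of `A`,
with eigenvalue `l` say, and then `μ = exp l` with `re l < 0`. By Gelfand's formula the powers
`exp A ^ k` decay geometrically, hence `exp (t A)` decays exponentially, and so does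
`Y X t = exp (t A) X exp (t Aᵀ)`. As `Y X` solves `Ẏ = L Y` for `L X = A X + X Aᵀ`, the
fundamental theorem of calculus gives `∫₀^∞ L (Y X t) dt = -X` for every `X`. For `X = Q` this
says `L W = -Q`. Since `L` commutes with the flow, `L X = 0` forces `X = -∫₀^∞ Y (L X) t dt = 0`,
so `L` is injective.
-/

open Filter Asymptotics Topology NormedSpace Set MeasureTheory
open scoped NNReal ENNReal

theorem Module.End.exists_hasEigenvector_of_commute {K V : Type*} [Field K] [IsAlgClosed K]
    [AddCommGroup V] [Module K V] [FiniteDimensional K V] {f g : Module.End K V}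
    (hfg : Commute f g) {μ : K} (hμ : f.HasEigenvalue μ) :
    ∃ ν v, f.HasEigenvector μ v ∧ g.HasEigenvector ν v := by
  have hmaps : MapsTo g (f.eigenspace μ) (f.eigenspace μ) := by
    simpa using Module.End.mapsTo_genEigenspace_of_comm hfg μ 1
  have : Nontrivial (f.eigenspace μ) := Submodule.nontrivial_iff_ne_bot.2 hμ
  obtain ⟨ν, hν⟩ := Module.End.exists_eigenvalue (g.restrict hmaps)
  obtain ⟨w, hw⟩ := hν.exists_hasEigenvector
  have hw0 : (w : V) ≠ 0 := by simpa using hw.2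
  refine ⟨ν, w, ⟨w.2, hw0⟩, ⟨?_, hw0⟩⟩
  rw [Module.End.mem_eigenspace_iff]
  exact congr_arg Subtype.val hw.apply_eq_smul

theorem isBigO_pow_of_spectralRadius_lt {𝔸 : Type*} [NormedRing 𝔸] [NormedAlgebra ℂ 𝔸]
    [CompleteSpace 𝔸] {a : 𝔸} {r : ℝ≥0} (h : spectralRadius ℂ a < r) :
    (fun k : ℕ => a ^ k) =O[atTop] fun k => (r : ℝ) ^ k := by
  refine IsBigO.of_bound 1 ?_
  filter_upwards [(spectrum.pow_nnnorm_pow_one_div_tendsto_nhds_spectralRadius a).eventually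
    (gt_mem_nhds h), eventually_gt_atTop 0] with k hk hk0
  rw [one_div, ENNReal.rpow_inv_lt_iff (by positivity), ENNReal.rpow_natCast] at hk
  have hk' : ‖a ^ k‖₊ < r ^ k := by exact_mod_cast hk
  simpa using (show ‖a ^ k‖ ≤ (r : ℝ) ^ k by exact_mod_cast hk'.le)

theorem isBigO_exp_smul_of_isBigO_exp_pow {𝔸 : Type*} [NormedRing 𝔸] [NormedAlgebra ℝ 𝔸]
    [CompleteSpace 𝔸] {a : 𝔸} {ε : ℝ} (hε : 0 ≤ ε)
    (h : (fun k : ℕ => exp a ^ k) =O[atTop] fun k => Real.exp (-ε * k)) :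
    (fun t : ℝ => exp (t • a)) =O[atTop] fun t => Real.exp (-ε * t) := by
  let : NormedAlgebra ℚ 𝔸 := NormedAlgebra.restrictScalars ℚ ℝ 𝔸
  have hcont : Continuous fun s : ℝ => exp (s • a) :=
    exp_continuous.comp (continuous_id.smul continuous_const)
  obtain ⟨C, hC⟩ := (isCompact_Icc (a := (0 : ℝ)) (b := 1)).exists_bound_of_continuousOn
    hcont.continuousOn
  have hsplit (t : ℝ) : exp (t • a) = exp a ^ ⌊t⌋₊ * exp ((t - ⌊t⌋₊) • a) := by
    rw [← exp_nsmul, ← Nat.cast_smul_eq_nsmul ℝ, ← exp_add_of_commute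
      (((Commute.refl a).smul_left _).smul_right _), ← add_smul, add_sub_cancel]
  have hfloor : (fun t : ℝ => exp a ^ ⌊t⌋₊) =O[atTop] fun t => Real.exp (-ε * t) := by
    refine (h.comp_tendsto tendsto_nat_floor_atTop).trans (IsBigO.of_bound (Real.exp ε) ?_)
    filter_upwards [eventually_ge_atTop 0] with t ht
    rw [Function.comp_apply, Real.norm_of_nonneg (Real.exp_pos _).le,
      Real.norm_of_nonneg (Real.exp_pos _).le, ← Real.exp_add, Real.exp_le_exp]
    nlinarith [Nat.lt_floor_add_one t]
  have hfract : (fun t : ℝ => exp ((t - ⌊t⌋₊) • a)) =O[atTop] fun _ => (1 : ℝ) := by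
    refine IsBigO.of_bound C ?_
    filter_upwards [eventually_ge_atTop 0] with t ht
    simpa using hC _ ⟨sub_nonneg.2 (Nat.floor_le ht), by linarith [Nat.lt_floor_add_one t]⟩
  simpa [← hsplit] using hfloor.mul hfract

theorem hasDerivAt_exp_smul_mul_mul_exp_smul {𝔸 : Type*} [NormedRing 𝔸] [NormedAlgebra ℝ 𝔸]
    [CompleteSpace 𝔸] (a b x : 𝔸) (t : ℝ) :
    HasDerivAt (fun s : ℝ => exp (s • a) * x * exp (s • b))
      (a * (exp (t • a) * x * exp (t • b)) + exp (t • a) * x * exp (t • b) * b) t := by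
  convert ((hasDerivAt_exp_smul_const' a t).mul_const x).mul (hasDerivAt_exp_smul_const b t)
    using 1
  · rfl
  · simp only [mul_assoc]

theorem isBigO_exp_neg_of_tendsto_exp_mul_smul {E : Type*} [NormedAddCommGroup E]
    [NormedSpace ℝ E] {f : ℝ → E} {b : ℝ}
    (h : Tendsto (fun t => Real.exp (b * t) • f t) atTop (𝓝 0)) :
    f =O[atTop] fun t => Real.exp (-b * t) := by
  refine ((isBigO_refl (fun t => Real.exp (-b * t)) atTop).smul (h.isBigO_one ℝ)).congr
    (fun t => ?_) (fun t => by simp)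
  rw [smul_smul, ← Real.exp_add]
  simp

theorem integrableOn_Ici_of_isBigO_exp_neg {E : Type*} [NormedAddCommGroup E] {f : ℝ → E}
    {a b : ℝ} (hb : 0 < b) (hf : ContinuousOn f (Ici a))
    (ho : f =O[atTop] fun t => Real.exp (-b * t)) : IntegrableOn f (Ici a) :=
  (hf.locallyIntegrableOn measurableSet_Ici).integrableOn_of_isBigO_atTop ho
    ⟨Ioi 0, Ioi_mem_atTop 0, exp_neg_integrableOn_Ioi 0 hb⟩

namespace Matrix

variable {m : Type*} [Fintype m] [DecidableEq m]

theorem exp_mulVec_of_mulVec_eq_smul {B : Matrix m m ℂ} {v : m → ℂ} {l : ℂ}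
    (hv : B *ᵥ v = l • v) : exp B *ᵥ v = Complex.exp l • v := by
  open scoped Norms.Operator in
  have hpow (k : ℕ) : B ^ k *ᵥ v = l ^ k • v := by
    induction k with
    | zero => simp
    | succ k ih => rw [pow_succ', ← mulVec_mulVec, ih, mulVec_smul, hv, smul_smul, pow_succ]
  have hB := (exp_series_hasSum_exp' (𝕂 := ℂ) B).map (mulVec.addMonoidHomLeft v)
    (continuous_id.matrix_mulVec continuous_const)
  have hl := (exp_series_hasSum_exp' (𝕂 := ℂ) l).smul_const v
  rw [← Complex.exp_eq_exp_ℂ] at hl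
  refine hB.unique (hl.congr_fun fun k => ?_)
  simp [mulVec.addMonoidHomLeft, smul_mulVec, hpow, smul_smul]

theorem exists_exp_eq_of_mem_spectrum_exp {B : Matrix m m ℂ} {μ : ℂ}
    (hμ : μ ∈ spectrum ℂ (exp B)) : ∃ l ∈ spectrum ℂ B, Complex.exp l = μ := by
  rw [← spectrum_toLin', ← Module.End.hasEigenvalue_iff_mem_spectrum] at hμ
  have hcomm : Commute (toLin' (exp B)) (toLin' B) :=
    ((Commute.refl B).exp_left).map toLinAlgEquiv'
  obtain ⟨l, v, hv, hl⟩ := Module.End.exists_hasEigenvector_of_commute hcomm hμ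
  refine ⟨l, by simpa [← spectrum_toLin', ← Module.End.hasEigenvalue_iff_mem_spectrum]
    using Module.End.hasEigenvalue_of_hasEigenvector hl, smul_left_injective ℂ hv.2 ?_⟩
  have hBv : B *ᵥ v = l • v := by simpa using hl.apply_eq_smul
  simpa [exp_mulVec_of_mulVec_eq_smul hBv] using hv.apply_eq_smul

theorem spectralRadius_exp_lt_one {B : Matrix m m ℂ} (hB : ∀ μ ∈ spectrum ℂ B, μ.re < 0) :
    spectralRadius ℂ (exp B) < 1 := by
  open scoped Norms.Operator in
  rcases (spectrum ℂ (exp B)).eq_empty_or_nonempty with h | h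
  · simp [spectralRadius, h]
  · refine spectrum.spectralRadius_lt_of_forall_lt_of_nonempty h (r := 1) fun μ hμ => ?_
    obtain ⟨l, hl, rfl⟩ := exists_exp_eq_of_mem_spectrum_exp hμ
    rw [← NNReal.coe_lt_coe, coe_nnnorm, Complex.norm_exp]
    exact Real.exp_lt_one_iff.2 (hB l hl)

/- The decay is stated as a limit rather than with a norm, since matrices carry no canonical
norm: this way it holds for every choice of norm. -/
theorem exists_tendsto_exp_mul_smul_exp_smul {B : Matrix m m ℂ}
    (hB : ∀ μ ∈ spectrum ℂ B, μ.re < 0) :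
    ∃ c > 0, Tendsto (fun t : ℝ => Real.exp (c * t) • exp (t • B)) atTop (𝓝 0) := by
  open scoped Norms.Operator in
  obtain ⟨r, hρr, hr1⟩ := ENNReal.lt_iff_exists_nnreal_btwn.1 (spectralRadius_exp_lt_one hB)
  have hr0 : 0 < (r : ℝ) := by exact_mod_cast pos_of_gt hρr
  have hr1' : (r : ℝ) < 1 := by exact_mod_cast hr1
  set ε := -Real.log r
  have hε : 0 < ε := neg_pos.2 (Real.log_neg hr0 hr1')
  have hpow : (fun k : ℕ => exp B ^ k) =O[atTop] fun k => Real.exp (-ε * k) := by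
    refine (isBigO_pow_of_spectralRadius_lt hρr).congr_right fun k => ?_
    rw [neg_neg, mul_comm, Real.exp_nat_mul, Real.exp_log hr0]
  have hdecay := (isBigO_refl (fun t : ℝ => Real.exp (ε / 2 * t)) atTop).smul
    (isBigO_exp_smul_of_isBigO_exp_pow hε.le hpow)
  refine ⟨ε / 2, half_pos hε, hdecay.trans_tendsto ?_⟩
  have hlin : Tendsto (fun t : ℝ => -(ε / 2) * t) atTop atBot :=
    tendsto_id.const_mul_atTop_of_neg (by linarith)
  refine (Real.tendsto_exp_atBot.comp hlin).congr fun t => ?_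
  rw [Function.comp_apply, smul_eq_mul, ← Real.exp_add]
  ring_nf

theorem exists_tendsto_exp_mul_smul_exp_smul_real {A : Matrix m m ℝ}
    (hA : ∀ μ ∈ spectrum ℂ (A.map Complex.ofReal), μ.re < 0) :
    ∃ c > 0, Tendsto (fun t : ℝ => Real.exp (c * t) • exp (t • A)) atTop (𝓝 0) := by
  obtain ⟨c, hc, h⟩ := exists_tendsto_exp_mul_smul_exp_smul hA
  refine ⟨c, hc, ?_⟩
  have hmap (t : ℝ) : exp (t • A.map Complex.ofReal) = (exp (t • A)).map Complex.ofReal := by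
    have hsmul : t • A.map Complex.ofReal = (t • A).map Complex.ofRealHom := by ext; simp
    open scoped Norms.Operator in
    exact hsmul ▸ (map_exp (Complex.ofRealHom.mapMatrix (m := m))
      (continuous_id.matrix_map Complex.continuous_ofReal) (t • A)).symm
  have hre (s : ℝ) (X : Matrix m m ℝ) : (s • X.map Complex.ofReal).map Complex.re = s • X := by
    ext; simp
  simpa [hmap, hre, Function.comp_def] using
    ((continuous_id.matrix_map Complex.continuous_re).tendsto 0).comp h

end Matrix

open Matrix

attribute [local instance] Matrix.normedAddCommGroup Matrix.normedSpace

namespace Matrix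

variable {m : Type*} [Fintype m] [DecidableEq m]

noncomputable def lyapunovFlow (A X : Matrix m m ℝ) (t : ℝ) : Matrix m m ℝ :=
  exp (t • A) * X * exp (t • Aᵀ)

noncomputable def lyapunovOp (A : Matrix m m ℝ) : Matrix m m ℝ →L[ℝ] Matrix m m ℝ :=
  LinearMap.toContinuousLinearMap (LinearMap.mulLeft ℝ A + LinearMap.mulRight ℝ Aᵀ)

@[simp]
theorem lyapunovOp_apply (A X : Matrix m m ℝ) : lyapunovOp A X = A * X + X * Aᵀ :=
  rfl

theorem lyapunovOp_lyapunovFlow (A X : Matrix m m ℝ) (t : ℝ) :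
    lyapunovOp A (lyapunovFlow A X t) = lyapunovFlow A (lyapunovOp A X) t := by
  have hA : A * exp (t • A) = exp (t • A) * A := ((Commute.refl A).smul_right t).exp_right.eq
  have hAT : exp (t • Aᵀ) * Aᵀ = Aᵀ * exp (t • Aᵀ) :=
    ((Commute.refl Aᵀ).smul_right t).exp_right.eq.symm
  simp only [lyapunovOp_apply, lyapunovFlow, Matrix.mul_add, Matrix.add_mul, ← mul_assoc, hA]
  simp only [mul_assoc, hAT]

/- `HasDerivAt` only depends on the topology, so it may be proved with the operator norm. -/
theorem hasDerivAt_lyapunovFlow (A X : Matrix m m ℝ) (t : ℝ) :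
    HasDerivAt (lyapunovFlow A X) (lyapunovOp A (lyapunovFlow A X t)) t :=
  open scoped Norms.Operator in hasDerivAt_exp_smul_mul_mul_exp_smul A Aᵀ X t

theorem continuous_lyapunovFlow (A X : Matrix m m ℝ) : Continuous (lyapunovFlow A X) :=
  continuous_iff_continuousAt.2 fun t => (hasDerivAt_lyapunovFlow A X t).continuousAt

theorem exists_isBigO_lyapunovFlow {A : Matrix m m ℝ}
    (hA : ∀ μ ∈ spectrum ℂ (A.map Complex.ofReal), μ.re < 0) :
    ∃ b > 0, ∀ X, lyapunovFlow A X =O[atTop] fun t => Real.exp (-b * t) := by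
  obtain ⟨c, hc, h⟩ := exists_tendsto_exp_mul_smul_exp_smul_real hA
  refine ⟨2 * c, by positivity, fun X => isBigO_exp_neg_of_tendsto_exp_mul_smul ?_⟩
  have hflow (t : ℝ) : Real.exp (2 * c * t) • lyapunovFlow A X t =
      (Real.exp (c * t) • exp (t • A)) * X * (Real.exp (c * t) • exp (t • A))ᵀ := by
    rw [lyapunovFlow, ← transpose_smul, exp_transpose]
    simp only [transpose_smul, Matrix.smul_mul, Matrix.mul_smul, smul_smul, ← Real.exp_add]
    ring_nf
  have hlim := (h.mul_const X).mul ((continuous_id.matrix_transpose.tendsto 0).comp h)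
  simp only [zero_mul] at hlim
  exact hlim.congr fun t => (hflow t).symm

theorem integral_lyapunovOp_lyapunovFlow {A : Matrix m m ℝ}
    (hA : ∀ μ ∈ spectrum ℂ (A.map Complex.ofReal), μ.re < 0) (X : Matrix m m ℝ) :
    ∫ t in Ioi 0, lyapunovOp A (lyapunovFlow A X t) = -X := by
  obtain ⟨b, hb, hO⟩ := exists_isBigO_lyapunovFlow hA
  have hint := integrableOn_Ici_of_isBigO_exp_neg (a := 0) hb
    (continuous_lyapunovFlow A X).continuousOn (hO X)
  have hlim : Tendsto (lyapunovFlow A X) atTop (𝓝 0) := (hO X).trans_tendsto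
    (Real.tendsto_exp_atBot.comp (tendsto_id.const_mul_atTop_of_neg (neg_neg_of_pos hb)))
  rw [integral_Ioi_of_hasDerivAt_of_tendsto' (fun t _ => hasDerivAt_lyapunovFlow A X t)
    ((lyapunovOp A).integrable_comp (hint.mono_set Ioi_subset_Ici_self)) hlim]
  simp [lyapunovFlow]

theorem lyapunovOp_injective {A : Matrix m m ℝ}
    (hA : ∀ μ ∈ spectrum ℂ (A.map Complex.ofReal), μ.re < 0) :
    Function.Injective (lyapunovOp A) := by
  refine (injective_iff_map_eq_zero (lyapunovOp A)).2 fun X hX => ?_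
  have h := integral_lyapunovOp_lyapunovFlow hA X
  simp_rw [lyapunovOp_lyapunovFlow, hX] at h
  simpa [lyapunovFlow] using h.symm

end Matrix

/-- If `A` is a Hurwitz real `n × n` matrix and `Q` any real `n × n`
matrix, then `W := ∫₀^∞ exp(tA) Q exp(tAᵀ) dt` converges and is the unique solution of the
Lyapunov equation `A W + W Aᵀ + Q = 0`. -/
theorem hurwitz_lyapunov_solution {n : ℕ}
    (A : Matrix (Fin n) (Fin n) ℝ)
    (hA : ∀ μ ∈ spectrum ℂ (A.map (Complex.ofReal)), μ.re < 0)
    (Q : Matrix (Fin n) (Fin n) ℝ)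
    (W : Matrix (Fin n) (Fin n) ℝ)
    (hW : W = ∫ t in Set.Ici (0 : ℝ),
      NormedSpace.exp (t • A) * Q * NormedSpace.exp (t • Aᵀ)) :
    @IntegrableOn ℝ (Matrix (Fin n) (Fin n) ℝ) _ _ SeminormedAddGroup.toContinuousENorm
        (fun t : ℝ => NormedSpace.exp (t • A) * Q * NormedSpace.exp (t • Aᵀ))
        (Set.Ici 0) volume ∧
      A * W + W * Aᵀ + Q = 0 ∧
      ∀ W' : Matrix (Fin n) (Fin n) ℝ, A * W' + W' * Aᵀ + Q = 0 → W' = W := by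
  obtain ⟨b, hb, hO⟩ := exists_isBigO_lyapunovFlow hA
  have hint := integrableOn_Ici_of_isBigO_exp_neg (a := 0) hb
    (continuous_lyapunovFlow A Q).continuousOn (hO Q)
  have hWflow : W = ∫ t in Ioi 0, lyapunovFlow A Q t := by
    rw [hW, integral_Ici_eq_integral_Ioi]
    rfl
  have hLW : lyapunovOp A W = -Q := by
    rw [hWflow]
    exact ((lyapunovOp A).integral_comp_comm (hint.mono_set Ioi_subset_Ici_self)).symm.trans
      (integral_lyapunovOp_lyapunovFlow hA Q)
  refine ⟨hint, by simpa [add_eq_zero_iff_eq_neg] using hLW, fun W' hW' => ?_⟩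
  refine lyapunovOp_injective hA ?_
  rw [hLW, lyapunovOp_apply]
  exact add_eq_zero_iff_eq_neg.1 hW'
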